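/- If G is a finite loopless graph (simple graph) with c connected components, then x = 0 is a root of its chromatic polynomial P(G, x) of multiplicity exactly c. -/

import Mathlib

/-- The number of proper colorings of `G` with a palette of `k` colors. -/
noncomputable def numColorings {V : Type} [Fintype V] (G : SimpleGraph V) (k : ℕ) : ℕ :=
  Nat.card {f : V → Fin k // ∀ u v, G.Adj u v → f u ≠ f v}

/-- `P` is the chromatic polynomial of `G`: for every natural number `k`, evaluating `P`
at `k` gives the number of proper `k`-colorings of `G`. -/
def IsChromaticPolynomial {V : Type} [Fintype V] (G : SimpleGraph V) (P : Polynomial ℝ) : Prop :=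
  ∀ k : ℕ, P.eval (k : ℝ) = numColorings G k

/-!
Inclusion–exclusion over the edges gives Whitney's expansion
`P(G, x) = ∑_{S ⊆ E} (-1)^|S| x^c(S)`, where `c(S)` is the number of components of the
spanning subgraph with edge set `S`. Since `c(S) ≥ c(E)`, the multiplicity of `0` is at least
`c(E)`, and it is exactly `c(E)` because the coefficient of `x^c(E)` has sign
`(-1)^(|V| - c(E))`. The sign is proved for the more general sum in which a set `T` of edges is
contracted, by deletion–contraction on an edge `e`: the deletion and contraction terms carry the
same sign, the contraction term is nonzero unless contracting `e` creates a loop, and in that case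
`e` lies on a cycle, so deleting it does not change `c` and the deletion term is nonzero.
-/

open Finset Polynomial

namespace SimpleGraph

variable {V : Type*} {G : SimpleGraph V} {u v x y : V}

lemma Reachable.eq_of_forall_adj {α : Type*} {f : V → α} (hf : ∀ u v, G.Adj u v → f u = f v)
    (h : G.Reachable u v) : f u = f v := by
  obtain ⟨p⟩ := h
  induction p with
  | nil => rfl
  | cons hadj _ ih => exact (hf _ _ hadj).trans ih

def constOnAdjEquiv (G : SimpleGraph V) (α : Type*) :
    {f : V → α // ∀ u v, G.Adj u v → f u = f v} ≃ (G.ConnectedComponent → α) where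
  toFun f := Quot.lift f.1 fun _ _ ↦ Reachable.eq_of_forall_adj f.2
  invFun g := ⟨fun v ↦ g (G.connectedComponentMk v),
    fun _ _ h ↦ congrArg g (ConnectedComponent.sound h.reachable)⟩
  left_inv _ := rfl
  right_inv _ := funext (ConnectedComponent.ind fun _ ↦ rfl)

lemma card_constOnAdj [Finite V] (G : SimpleGraph V) (α : Type*) :
    Nat.card {f : V → α // ∀ u v, G.Adj u v → f u = f v} =
      Nat.card α ^ Nat.card G.ConnectedComponent := by
  rw [Nat.card_congr (constOnAdjEquiv G α), Nat.card_fun]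

lemma reachable_sup_edge_iff :
    (G ⊔ edge x y).Reachable u v ↔
      G.Reachable u v ∨ G.Reachable u x ∧ G.Reachable y v ∨
        G.Reachable u y ∧ G.Reachable x v := by
  constructor
  · rintro ⟨p⟩
    induction p with
    | nil => exact Or.inl .rfl
    | cons hadj _ ih =>
      rcases hadj with hadj | hadj
      · have := hadj.reachable
        grind [Reachable.trans]
      · rw [edge_adj] at hadj
        grind [Reachable.refl, Reachable.symm]
  · have hxy : (G ⊔ edge x y).Reachable x y := by
      rcases eq_or_ne x y with rfl | hne
      · rfl
      · exact Adj.reachable (Or.inr ((edge_adj ..).mpr ⟨Or.inl ⟨rfl, rfl⟩, hne⟩))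
    have hmono {u v : V} (h : G.Reachable u v) := h.mono (le_sup_left : G ≤ G ⊔ edge x y)
    rintro (h | ⟨h₁, h₂⟩ | ⟨h₁, h₂⟩)
    · exact hmono h
    · exact (hmono h₁).trans (hxy.trans (hmono h₂))
    · exact (hmono h₁).trans (hxy.symm.trans (hmono h₂))

lemma Reachable.of_reachable_sup_edge {H : SimpleGraph V} (hGH : G ≤ H)
    (h : (G ⊔ edge x y).Reachable u v) (hG : ¬G.Reachable u v) (hH : H.Reachable u v) :
    H.Reachable x y := by
  have hmono {a b : V} (h : G.Reachable a b) := h.mono hGH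
  rcases reachable_sup_edge_iff.1 h with h | ⟨h₁, h₂⟩ | ⟨h₁, h₂⟩
  · exact absurd h hG
  · exact (hmono h₁).symm.trans (hH.trans (hmono h₂).symm)
  · exact (hmono h₂).trans (hH.symm.trans (hmono h₁))

lemma card_connectedComponent_sup_edge_of_reachable (h : G.Reachable x y) :
    Nat.card (G ⊔ edge x y).ConnectedComponent = Nat.card G.ConnectedComponent :=
  Nat.card_congr <| Quot.congrRight fun u v ↦ by
    rw [reachable_sup_edge_iff]
    constructor
    · rintro (h' | ⟨h₁, h₂⟩ | ⟨h₁, h₂⟩)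
      · exact h'
      · exact h₁.trans (h.trans h₂)
      · exact h₁.trans (h.symm.trans h₂)
    · exact Or.inl

lemma card_connectedComponent_sup_edge_add_one [Finite V] (h : ¬G.Reachable x y) :
    Nat.card (G ⊔ edge x y).ConnectedComponent + 1 = Nat.card G.ConnectedComponent := by
  classical
  have := Fintype.ofFinite G.ConnectedComponent
  let φ := ConnectedComponent.map (Hom.ofLE (le_sup_left : G ≤ G ⊔ edge x y))
  -- `φ` merges exactly the components of `x` and `y`
  have hφ : Function.Bijective
      fun c : {c : G.ConnectedComponent // c ≠ G.connectedComponentMk y} ↦ φ c.1 := by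
    constructor
    · rintro ⟨c, hc⟩ ⟨d, hd⟩ hcd
      induction c using ConnectedComponent.ind with | h u
      induction d using ConnectedComponent.ind with | h v
      rcases reachable_sup_edge_iff.1 (ConnectedComponent.exact hcd) with
        huv | ⟨-, hyv⟩ | ⟨huy, -⟩
      · exact Subtype.ext (ConnectedComponent.sound huv)
      · exact absurd (ConnectedComponent.sound hyv.symm) hd
      · exact absurd (ConnectedComponent.sound huy) hc
    · intro c
      induction c using ConnectedComponent.ind with | h w
      by_cases hw : G.Reachable w y
      · refine ⟨⟨G.connectedComponentMk x, mt ConnectedComponent.exact h⟩, ?_⟩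
        exact ConnectedComponent.sound
          (reachable_sup_edge_iff.2 (Or.inr (Or.inl ⟨.rfl, hw.symm⟩)))
      · exact ⟨⟨G.connectedComponentMk w, mt ConnectedComponent.exact hw⟩, rfl⟩
  rw [← Nat.card_eq_of_bijective _ hφ, Nat.card_eq_fintype_card, Nat.card_eq_fintype_card,
    Fintype.card_subtype_compl, Fintype.card_subtype_eq]
  have : 0 < Fintype.card G.ConnectedComponent :=
    Fintype.card_pos_iff.2 ⟨G.connectedComponentMk y⟩
  omega

section Whitney

variable {S T F : Finset (Sym2 V)}

noncomputable def numComponents (S : Finset (Sym2 V)) : ℕ :=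
  Nat.card (fromEdgeSet (S : Set (Sym2 V))).ConnectedComponent

lemma numComponents_anti [Finite V] (h : S ⊆ T) : numComponents T ≤ numComponents S :=
  ConnectedComponent.card_le_card_of_le (fromEdgeSet_mono (coe_subset.2 h))

variable [DecidableEq V]

lemma fromEdgeSet_insert_mk (S : Finset (Sym2 V)) (x y : V) :
    fromEdgeSet ↑(insert s(x, y) S) = fromEdgeSet ↑S ⊔ edge x y := by
  rw [coe_insert, Set.insert_eq, fromEdgeSet_union, sup_comm, edge]

lemma numComponents_insert_of_reachable (h : (fromEdgeSet ↑S).Reachable x y) :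
    numComponents (insert s(x, y) S) = numComponents S := by
  rw [numComponents, fromEdgeSet_insert_mk, card_connectedComponent_sup_edge_of_reachable h,
    numComponents]

lemma numComponents_insert_add_one [Finite V] (h : ¬(fromEdgeSet ↑S).Reachable x y) :
    numComponents (insert s(x, y) S) + 1 = numComponents S := by
  rw [numComponents, fromEdgeSet_insert_mk, card_connectedComponent_sup_edge_add_one h,
    numComponents]

variable (R : Type*) [CommRing R]

/-- For `T = ∅` this is Whitney's expansion of the chromatic polynomial of the graph with edge set
`F`; in general it is the chromatic polynomial of that graph with the edges of `T` contracted. -/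
noncomputable def whitneyPoly (T F : Finset (Sym2 V)) : R[X] :=
  ∑ S ∈ F.powerset, monomial (numComponents (T ∪ S)) ((-1) ^ #S)

lemma whitneyPoly_empty (T : Finset (Sym2 V)) : whitneyPoly R T ∅ = X ^ numComponents T := by
  simp [whitneyPoly, X_pow_eq_monomial]

lemma whitneyPoly_insert {e : Sym2 V} (he : e ∉ F) :
    whitneyPoly R T (insert e F) = whitneyPoly R T F - whitneyPoly R (insert e T) F := by
  rw [whitneyPoly, sum_powerset_insert he, sub_eq_add_neg, whitneyPoly, whitneyPoly,
    ← sum_neg_distrib]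
  congr 1
  refine sum_congr rfl fun S hS ↦ ?_
  rw [card_insert_of_notMem fun h ↦ he (mem_powerset.1 hS h), union_insert, insert_union,
    pow_succ, mul_neg_one, map_neg]

lemma whitneyPoly_insert_of_reachable (h : (fromEdgeSet ↑T).Reachable x y) :
    whitneyPoly R (insert s(x, y) T) F = whitneyPoly R T F :=
  sum_congr rfl fun _ _ ↦ by
    rw [insert_union, numComponents_insert_of_reachable (h.mono (fromEdgeSet_mono (by simp)))]

lemma whitneyPoly_eq_zero_of_reachable (hxy : s(x, y) ∈ F)
    (h : (fromEdgeSet ↑T).Reachable x y) : whitneyPoly R T F = 0 := by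
  rw [← insert_erase hxy, whitneyPoly_insert R (notMem_erase _ _),
    whitneyPoly_insert_of_reachable R h, sub_self]

variable [Finite V]

lemma coeff_whitneyPoly_of_lt {n : ℕ} (hn : n < numComponents (T ∪ F)) :
    (whitneyPoly R T F).coeff n = 0 := by
  rw [whitneyPoly, finsetSum_coeff]
  refine sum_eq_zero fun S hS ↦ coeff_monomial_of_ne _ ?_
  have := numComponents_anti (union_subset_union_right (mem_powerset.1 hS) : T ∪ S ⊆ T ∪ F)
  omega

variable {R} [LinearOrder R] [IsStrictOrderedRing R]

theorem neg_one_pow_mul_coeff_whitneyPoly_pos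
    (hF : ∀ x y, s(x, y) ∈ F → ¬(fromEdgeSet ↑T).Reachable x y) :
    0 < (-1) ^ (numComponents T + numComponents (T ∪ F)) *
      (whitneyPoly R T F).coeff (numComponents (T ∪ F)) := by
  induction F using Finset.induction_on generalizing T with
  | empty => simp [whitneyPoly_empty, ← two_mul, pow_mul]
  | insert e F he ih =>
    induction e using Sym2.ind with | h x y
    set m := numComponents (T ∪ insert s(x, y) F)
    have hFT (a b : V) (hab : s(a, b) ∈ F) : ¬(fromEdgeSet ↑T).Reachable a b :=
      hF a b (mem_insert_of_mem hab)
    have hcT : numComponents (insert s(x, y) T) + 1 = numComponents T :=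
      numComponents_insert_add_one (hF x y (mem_insert_self _ _))
    have hm : insert s(x, y) T ∪ F = T ∪ insert s(x, y) F := by rw [insert_union, union_insert]
    rw [whitneyPoly_insert R he, coeff_sub]
    by_cases hloop : ∃ a b, s(a, b) ∈ F ∧ (fromEdgeSet ↑(insert s(x, y) T)).Reachable a b
    · -- contracting `s(x, y)` turns an edge of `F` into a loop, so `s(x, y)` lies on a cycle
      obtain ⟨a, b, hab, hr⟩ := hloop
      have hne : a ≠ b := by rintro rfl; exact hFT a a hab .rfl
      have hxy : (fromEdgeSet ↑(T ∪ F)).Reachable x y := by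
        refine Reachable.of_reachable_sup_edge (fromEdgeSet_mono (by simp))
          (fromEdgeSet_insert_mk T x y ▸ hr) (hFT a b hab) (Adj.reachable ?_)
        exact (fromEdgeSet_adj _).2 ⟨by simp [hab], hne⟩
      have hc : numComponents (T ∪ F) = m := by
        rw [← numComponents_insert_of_reachable hxy, ← union_insert]
      rw [whitneyPoly_eq_zero_of_reachable R hab hr, coeff_zero, sub_zero, ← hc]
      exact ih hFT
    · push Not at hloop
      have hcontract := ih hloop
      rw [hm] at hcontract
      have hdelete : 0 ≤ (-1) ^ (numComponents T + m) * (whitneyPoly R T F).coeff m := by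
        have hle : m ≤ numComponents (T ∪ F) :=
          numComponents_anti (union_subset_union_right (subset_insert _ F))
        rcases hle.eq_or_lt with h | h
        · rw [h]; exact (ih hFT).le
        · rw [coeff_whitneyPoly_of_lt R h, mul_zero]
      calc (0 : R)
          _ < (-1) ^ (numComponents T + m) * (whitneyPoly R T F).coeff m +
              (-1) ^ (numComponents (insert s(x, y) T) + m) *
                (whitneyPoly R (insert s(x, y) T) F).coeff m :=
            add_pos_of_nonneg_of_pos hdelete hcontract
          _ = _ := by rw [← hcT, add_right_comm, pow_succ]; ring

theorem natTrailingDegree_whitneyPoly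
    (hF : ∀ x y, s(x, y) ∈ F → ¬(fromEdgeSet ↑T).Reachable x y) :
    (whitneyPoly R T F).natTrailingDegree = numComponents (T ∪ F) := by
  have hcoeff : (whitneyPoly R T F).coeff (numComponents (T ∪ F)) ≠ 0 := fun h ↦ by
    simpa [h] using neg_one_pow_mul_coeff_whitneyPoly_pos (R := R) hF
  exact le_antisymm (natTrailingDegree_le_of_ne_zero hcoeff)
    (le_natTrailingDegree (fun h ↦ hcoeff (by rw [h, coeff_zero]))
      fun _ ↦ coeff_whitneyPoly_of_lt R)

end Whitney

end SimpleGraph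

open SimpleGraph

theorem numColorings_eq_sum_powerset {V : Type} [Fintype V] [DecidableEq V] (G : SimpleGraph V)
    [DecidableRel G.Adj] (k : ℕ) :
    (numColorings G k : ℤ) =
      ∑ S ∈ G.edgeFinset.powerset, (-1) ^ #S * (k : ℤ) ^ numComponents S := by
  let mono (e : Sym2 V) : Finset (V → Fin k) := {f | (e.map f).IsDiag}
  have hproper : #(G.edgeFinset.inf fun e ↦ (mono e)ᶜ) = numColorings G k := by
    rw [numColorings, Nat.card_eq_fintype_card, Fintype.card_subtype]
    congr 1
    ext f
    simp [mono, mem_inf, Sym2.forall]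
  have hmono (S : Finset (Sym2 V)) : #(S.inf mono) = k ^ numComponents S := by
    calc #(S.inf mono)
        _ = Nat.card {f : V → Fin k // ∀ u v, (fromEdgeSet ↑S).Adj u v → f u = f v} := by
          rw [Nat.card_eq_fintype_card, Fintype.card_subtype]
          congr 1
          ext f
          simp only [mono, mem_inf, mem_filter, mem_univ, true_and, Sym2.forall, Sym2.map_mk,
            Sym2.mk_isDiag_iff, fromEdgeSet_adj, mem_coe]
          grind
        _ = k ^ numComponents S := by rw [card_constOnAdj, Nat.card_fin, numComponents]
  rw [← hproper, inclusion_exclusion_card_inf_compl]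
  simp [hmono]

theorem isChromaticPolynomial_whitneyPoly {V : Type} [Fintype V] [DecidableEq V]
    (G : SimpleGraph V) [DecidableRel G.Adj] :
    IsChromaticPolynomial G (whitneyPoly ℝ ∅ G.edgeFinset) := by
  intro k
  simp only [whitneyPoly, eval_finsetSum, eval_monomial, empty_union]
  exact_mod_cast (numColorings_eq_sum_powerset G k).symm

theorem IsChromaticPolynomial.unique {V : Type} [Fintype V] {G : SimpleGraph V} {P Q : ℝ[X]}
    (hP : IsChromaticPolynomial G P) (hQ : IsChromaticPolynomial G Q) : P = Q :=
  eq_of_infinite_eval_eq P Q <| (Set.infinite_range_of_injective Nat.cast_injective).mono <| by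
    rintro _ ⟨k, rfl⟩
    simp [hP k, hQ k]

/-- If `G` is a finite loopless (simple) graph with `c` connected components, then `x = 0`
is a root of its chromatic polynomial of multiplicity exactly `c`. -/
theorem chromaticPolynomial_rootMultiplicity_zero {V : Type} [Fintype V] (G : SimpleGraph V)
    (P : Polynomial ℝ) (hP : IsChromaticPolynomial G P) :
    P.rootMultiplicity 0 = Nat.card G.ConnectedComponent := by
  classical
  rw [hP.unique (isChromaticPolynomial_whitneyPoly G), rootMultiplicity_eq_natTrailingDegree',
    natTrailingDegree_whitneyPoly, empty_union, numComponents, coe_edgeFinset, fromEdgeSet_edgeSet]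
  intro x y hxy hr
  rw [coe_empty, fromEdgeSet_empty, reachable_bot] at hr
  exact (G.mem_edgeFinset.1 hxy).ne hr
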